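/- arXiv:math/0304311 — 3 statements merged into one kernel-verified Lean document; each statement's English description precedes it below -/
import Mathlib

section
/- Let ψ : [-π,π] → ℝ be a continuous even function with ψ(0) = 1 that is the characteristic function of an aperiodic symmetric probability distribution on ℤ (so that max_{δ ≤ |u| ≤ π} ψ(u) < 1 for every δ > 0 and |ψ| ≤ 1). Let g(u) = Σ_{j=0}^m a_j cos(uj) be a nonzero cosine polynomial. Then it is not the case that ∫_{-π}^{π} g(u) ψ(u)^t du = 0 for all t ∈ ℕ. -/
open scoped Real

open Polynomial in
private lemma cheb_T_aux :
    ∀ n : ℕ, (Chebyshev.T ℝ (n:ℤ)).natDegree ≤ n ∧ (Chebyshev.T ℝ (n:ℤ)).coeff n ≠ 0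
  | 0 => by simp [Chebyshev.T_zero]
  | 1 => by simp [Chebyshev.T_one]
  | (n+2) => by
      have h1 := cheb_T_aux (n+1)
      have h0 := cheb_T_aux n
      have key : Chebyshev.T ℝ ((n+2 : ℕ) : ℤ)
          = 2 * X * Chebyshev.T ℝ ((n+1 : ℕ) : ℤ) - Chebyshev.T ℝ (n : ℤ) := by
        push_cast
        exact Chebyshev.T_add_two ℝ n
      constructor
      · rw [key]
        refine (natDegree_sub_le _ _).trans ?_
        have : (2 * X * Chebyshev.T ℝ ((n+1:ℕ):ℤ)).natDegree ≤ n + 2 := by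
          refine (natDegree_mul_le).trans ?_
          have h2X : (2 * X : ℝ[X]).natDegree ≤ 1 := by
            refine (natDegree_mul_le).trans ?_
            simp
          omega
        have := h0.1
        omega
      · rw [key]
        have hz : (Chebyshev.T ℝ (n:ℤ)).coeff (n+2) = 0 :=
          coeff_eq_zero_of_natDegree_lt (by omega)
        have hx : (2 * X * Chebyshev.T ℝ ((n+1:ℕ):ℤ)).coeff (n+2)
            = 2 * (Chebyshev.T ℝ ((n+1:ℕ):ℤ)).coeff (n+1) := by
          rw [mul_assoc, (map_ofNat Polynomial.C 2).symm, coeff_C_mul, coeff_X_mul]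
        rw [coeff_sub, hz, hx]
        have := h1.2
        simp only [sub_zero]
        intro hc
        exact this (by linarith [mul_eq_zero.mp hc])

/-- A continuous function with no zeros on `(0, ε)` has constant sign there. -/
private lemma sign_const {f : ℝ → ℝ} (hf : Continuous f) {ε : ℝ} (hε : 0 < ε)
    (hne : ∀ u, 0 < u → u < ε → f u ≠ 0) :
    ∃ s : ℝ, (s = 1 ∨ s = -1) ∧ ∀ u, 0 < u → u < ε → 0 < s * f u := by
  have hmix : ∀ x y : ℝ, 0 < x → x < ε → 0 < y → y < ε → f x < 0 → 0 < f y → False := by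
    intro x y hx hxε hy hyε hfx hfy
    rcases lt_trichotomy x y with hlt | heq | hgt
    · have : (0:ℝ) ∈ Set.Ioo (f x) (f y) := ⟨hfx, hfy⟩
      obtain ⟨c, hc, hfc⟩ := intermediate_value_Ioo hlt.le hf.continuousOn this
      exact hne c (hx.trans hc.1) (hc.2.trans hyε) hfc
    · subst heq; linarith
    · have : (0:ℝ) ∈ Set.Ioo (f x) (f y) := ⟨hfx, hfy⟩
      obtain ⟨c, hc, hfc⟩ := intermediate_value_Ioo' hgt.le hf.continuousOn this
      exact hne c (hy.trans hc.1) (hc.2.trans hxε) hfc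
  rcases lt_trichotomy (f (ε/2)) 0 with hneg | hzero | hpos
  · refine ⟨-1, Or.inr rfl, fun u hu huε => ?_⟩
    rcases (hne u hu huε).lt_or_gt with h | h
    · nlinarith
    · exact absurd (hmix (ε/2) u (half_pos hε) (half_lt_self hε) hu huε hneg h) (fun q => q)
  · exact absurd hzero (hne (ε/2) (half_pos hε) (half_lt_self hε))
  · refine ⟨1, Or.inl rfl, fun u hu huε => ?_⟩
    rcases (hne u hu huε).lt_or_gt with h | h
    · exact absurd (hmix u (ε/2) hu huε (half_pos hε) (half_lt_self hε) h hpos) (fun q => q)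
    · nlinarith

/-- If `ψ` is a continuous even function on `[-π,π]` with `ψ(0)=1`, `|ψ| ≤ 1`,
`sup_{δ ≤ |u| ≤ π} |ψ(u)| < 1` for every `δ > 0` (aperiodicity), and `ψ > 0`
near `0`, and `g(u) = Σ_{j≤m} a_j cos(uj)` is a nonzero cosine polynomial, then
the integrals `∫_{-π}^{π} g(u) ψ(u)^t du` cannot all vanish. -/
theorem cosine_polynomial_integrals_not_all_zero
    (ψ : ℝ → ℝ) (hcont : Continuous ψ) (heven : ∀ u, ψ (-u) = ψ u)
    (hone : ψ 0 = 1) (hbdd : ∀ u, |ψ u| ≤ 1)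
    (haper : ∀ δ : ℝ, 0 < δ → δ ≤ π →
      ∃ A : ℝ, A < 1 ∧ ∀ u : ℝ, δ ≤ |u| → |u| ≤ π → |ψ u| ≤ A)
    (hpos : ∃ δ : ℝ, 0 < δ ∧ ∀ u : ℝ, |u| < δ → 0 < ψ u)
    (m : ℕ) (a : ℕ → ℝ) (hnz : ∃ j ≤ m, a j ≠ 0)
    (g : ℝ → ℝ)
    (hg : ∀ u, g u = ∑ j ∈ Finset.range (m + 1), a j * Real.cos (u * j)) :
    ¬ (∀ t : ℕ, ∫ u in (-π)..π, g u * (ψ u) ^ t = 0) := by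
  intro h
  classical
  -- continuity and evenness of g
  have hgcont : Continuous g := by
    have : g = fun u => ∑ j ∈ Finset.range (m + 1), a j * Real.cos (u * j) := funext hg
    rw [this]
    exact continuous_finset_sum _ fun j _ => continuous_const.mul
      (Real.continuous_cos.comp (continuous_id.mul continuous_const))
  have hgeven : ∀ u, g (-u) = g u := by
    intro u
    rw [hg, hg]
    refine Finset.sum_congr rfl fun j _ => ?_
    rw [show (-u) * (j:ℝ) = -(u * j) by ring, Real.cos_neg]
  -- Step A : g is nonzero with constant sign on a punctured right-neighborhood of 0
  set P : Polynomial ℝ := ∑ j ∈ Finset.range (m + 1),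
    Polynomial.C (a j) * Polynomial.Chebyshev.T ℝ (j : ℤ) with hP
  have hPeval : ∀ u : ℝ, g u = P.eval (Real.cos u) := by
    intro u
    rw [hg, hP, Polynomial.eval_finset_sum]
    refine Finset.sum_congr rfl fun j _ => ?_
    rw [Polynomial.eval_mul, Polynomial.eval_C, Polynomial.Chebyshev.T_real_cos]
    push_cast
    rw [mul_comm u (j:ℝ)]
  have hPne : P ≠ 0 := by
    obtain ⟨j1, hj1m, hj1⟩ := hnz
    set S : Finset ℕ := (Finset.range (m + 1)).filter (fun j => a j ≠ 0) with hS
    have hSne : S.Nonempty := ⟨j1, by simp [hS, Nat.lt_succ_of_le hj1m, hj1]⟩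
    set j0 := S.max' hSne with hj0
    have hj0mem : j0 ∈ S := S.max'_mem hSne
    have hj0a : a j0 ≠ 0 := (Finset.mem_filter.mp hj0mem).2
    have hj0m : j0 < m + 1 := Finset.mem_range.mp (Finset.mem_filter.mp hj0mem).1
    intro h0
    have hcoeff : P.coeff j0 = a j0 * (Polynomial.Chebyshev.T ℝ (j0 : ℤ)).coeff j0 := by
      rw [hP, Polynomial.finset_sum_coeff]
      rw [Finset.sum_eq_single j0]
      · rw [Polynomial.coeff_C_mul]
      · intro j hjmem hjne
        by_cases haj : a j = 0
        · simp [haj]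
        · have hjS : j ∈ S := Finset.mem_filter.mpr ⟨hjmem, haj⟩
          have : j < j0 := lt_of_le_of_ne (S.le_max' j hjS) hjne
          rw [Polynomial.coeff_C_mul,
            Polynomial.coeff_eq_zero_of_natDegree_lt ((cheb_T_aux j).1.trans_lt this), mul_zero]
      · intro hnot
        exact absurd (Finset.mem_range.mpr hj0m) hnot
    rw [h0, Polynomial.coeff_zero] at hcoeff
    exact (cheb_T_aux j0).2 (by
      rcases mul_eq_zero.mp hcoeff.symm with h | h
      · exact absurd h hj0a
      · exact h)
  -- roots of P are finite; find η < 1 with no roots in (η, 1)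
  obtain ⟨η, hη1, hηroot⟩ : ∃ η : ℝ, η < 1 ∧ ∀ x : ℝ, η < x → x < 1 → P.eval x ≠ 0 := by
    have hfin : Set.Finite {x : ℝ | P.IsRoot x} := P.finite_setOf_isRoot hPne
    set Zf := hfin.toFinset with hZf
    set F1 : Finset ℝ := insert (0:ℝ) (Zf.filter (fun x => x < 1)) with hF1
    have hF1ne : F1.Nonempty := ⟨0, Finset.mem_insert_self _ _⟩
    refine ⟨F1.max' hF1ne, ?_, ?_⟩
    · rw [Finset.max'_lt_iff]
      intro y hy
      rcases Finset.mem_insert.mp hy with rfl | hy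
      · norm_num
      · exact (Finset.mem_filter.mp hy).2
    · intro x hx hx1 hev
      have hxZ : x ∈ Zf := hfin.mem_toFinset.mpr hev
      have hxF : x ∈ F1 := Finset.mem_insert_of_mem (Finset.mem_filter.mpr ⟨hxZ, hx1⟩)
      exact absurd (F1.le_max' x hxF) (not_le.mpr hx)
  -- a small ε on which cos u ∈ (η, 1), hence g ≠ 0
  obtain ⟨r, hr, hrsub⟩ : ∃ r > 0, Metric.ball (0:ℝ) r ⊆ Real.cos ⁻¹' (Set.Ioi η) := by
    have hopen : IsOpen (Real.cos ⁻¹' (Set.Ioi η)) := isOpen_Ioi.preimage Real.continuous_cos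
    have h0mem : (0:ℝ) ∈ Real.cos ⁻¹' (Set.Ioi η) := by
      simp only [Set.mem_preimage, Real.cos_zero, Set.mem_Ioi]
      exact hη1
    exact Metric.isOpen_iff.mp hopen 0 h0mem
  set ε : ℝ := min r 1 with hε
  have hεpos : 0 < ε := lt_min hr one_pos
  have hgne : ∀ u : ℝ, 0 < u → u < ε → g u ≠ 0 := by
    intro u hu huε
    rw [hPeval]
    have hcosη : η < Real.cos u := by
      have : u ∈ Metric.ball (0:ℝ) r := by
        simp only [Metric.mem_ball, Real.dist_eq, sub_zero]
        rw [abs_of_pos hu]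
        exact huε.trans_le (min_le_left _ _)
      exact hrsub this
    have hcos1 : Real.cos u < 1 := by
      refine lt_of_le_of_ne (Real.cos_le_one u) ?_
      intro hc
      have h2π : (1:ℝ) < 2 * π := by nlinarith [Real.pi_gt_three]
      have := (Real.cos_eq_one_iff_of_lt_of_lt
        (by linarith [huε.trans_le (min_le_right r 1)])
        (by linarith [huε.trans_le (min_le_right r 1)])).mp hc
      linarith
    exact hηroot _ hcosη hcos1
  obtain ⟨s, hs, hsg⟩ := sign_const hgcont hεpos hgne
  set G : ℝ → ℝ := fun u => s * g u with hGdef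
  have hGcont : Continuous G := continuous_const.mul hgcont
  have hGeven : ∀ u, G (-u) = G u := fun u => by simp [hGdef, hgeven u]
  have hGpos : ∀ u, 0 < u → u < ε → 0 < G u := fun u hu huε => hsg u hu huε
  have hG0 : 0 ≤ G 0 := by
    have htend : Filter.Tendsto G (nhdsWithin 0 (Set.Ioi 0)) (nhds (G 0)) :=
      (hGcont.tendsto 0).mono_left nhdsWithin_le_nhds
    refine ge_of_tendsto htend ?_
    filter_upwards [Ioo_mem_nhdsGT_of_mem (Set.left_mem_Ico.mpr hεpos)] with u hu
    exact (hGpos u hu.1 hu.2).le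
  have hGt : ∀ t : ℕ, (∫ u in (-π)..π, G u * (ψ u) ^ t) = 0 := by
    intro t
    have : (fun u => G u * ψ u ^ t) = fun u => s * (g u * ψ u ^ t) := by
      funext u; rw [hGdef]; ring
    rw [this, intervalIntegral.integral_const_mul, h t, mul_zero]
  -- Step B : choose δ, threshold c
  obtain ⟨δp, hδp, hδppos⟩ := hpos
  set δ : ℝ := min (min δp ε) π with hδdef
  have hδpos : 0 < δ := lt_min (lt_min hδp hεpos) Real.pi_pos
  have hδπ : δ ≤ π := min_le_right _ _
  have hδε : δ ≤ ε := (min_le_left _ _).trans (min_le_right _ _)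
  obtain ⟨A, hA1, hA⟩ := haper δ hδpos hδπ
  set c : ℝ := (max A 0 + 1) / 2 with hc
  have hcA : A < c := by
    have : A ≤ max A 0 := le_max_left _ _
    rw [hc]; linarith [max_lt hA1 one_pos]
  have hc1 : c < 1 := by rw [hc]; linarith [max_lt hA1 one_pos]
  have hc0 : 0 < c := by rw [hc]; positivity
  set F : ℝ → ℝ := fun x => max (x - c) 0 with hFdef
  have hFcont : Continuous F := (continuous_id.sub continuous_const).max continuous_const
  have hFnonneg : ∀ x, 0 ≤ F x := fun x => le_max_right _ _
  have hFzero : ∀ x, x ≤ c → F x = 0 := fun x hx => max_eq_right (by linarith)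
  -- the integrand F(ψ u) * G u is nonnegative on [-π, π]
  have hnonneg : ∀ u : ℝ, u ∈ Set.Icc (-π) π → 0 ≤ F (ψ u) * G u := by
    intro u hu
    by_cases hud : |u| < δ
    · refine mul_nonneg (hFnonneg _) ?_
      rcases eq_or_ne u 0 with rfl | hu0
      · exact hG0
      · have habs : 0 < |u| := abs_pos.mpr hu0
        have : 0 < G |u| := hGpos _ habs (hud.trans_le hδε)
        rcases abs_choice u with hcase | hcase
        · rw [hcase] at this; exact this.le
        · rw [hcase] at this; rw [hGeven u] at this; exact this.le
    · have hψA : |ψ u| ≤ A := hA u (not_lt.mp hud) (abs_le.mpr ⟨hu.1, hu.2⟩)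
      have : ψ u ≤ c := le_trans (le_abs_self _) (hψA.trans hcA.le)
      rw [hFzero _ this, zero_mul]
  -- the integrand is strictly positive on a small interval (α, β)
  obtain ⟨r2, hr2, hr2sub⟩ : ∃ r2 > 0, Metric.ball (0:ℝ) r2 ⊆ ψ ⁻¹' (Set.Ioi c) := by
    have hopen : IsOpen (ψ ⁻¹' (Set.Ioi c)) := isOpen_Ioi.preimage hcont
    have h0mem : (0:ℝ) ∈ ψ ⁻¹' (Set.Ioi c) := by
      simp only [Set.mem_preimage, hone, Set.mem_Ioi]; exact hc1
    exact Metric.isOpen_iff.mp hopen 0 h0mem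
  set β : ℝ := min r2 δ / 2 with hβ
  set α : ℝ := β / 2 with hα
  have hβpos : 0 < β := by rw [hβ]; positivity
  have hαβ : α < β := by rw [hα]; linarith
  have hαpos : 0 < α := by rw [hα]; linarith
  have hβδ : β < δ := by
    rw [hβ]
    have : min r2 δ ≤ δ := min_le_right _ _
    linarith
  have hβr2 : β < r2 := by
    rw [hβ]
    have : min r2 δ ≤ r2 := min_le_left _ _
    linarith
  have hmidpos : ∀ u ∈ Set.Ioo α β, 0 < F (ψ u) * G u := by
    intro u hu
    have hu0 : 0 < u := hαpos.trans hu.1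
    have huβ : u < β := hu.2
    have hψc : c < ψ u := by
      have : u ∈ Metric.ball (0:ℝ) r2 := by
        simp only [Metric.mem_ball, Real.dist_eq, sub_zero, abs_of_pos hu0]
        exact huβ.trans hβr2
      exact hr2sub this
    have hF : 0 < F (ψ u) := by
      rw [hFdef]
      simp only [lt_max_iff]
      left; linarith
    exact mul_pos hF (hGpos u hu0 ((huβ.trans hβδ).trans_le hδε))
  -- Step C : integrals of p(ψ) * G vanish for every polynomial p
  have hint : ∀ q : ℝ → ℝ, Continuous q → IntervalIntegrable q MeasureTheory.volume (-π) π :=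
    fun q hq => hq.intervalIntegrable _ _
  have hpoly : ∀ p : Polynomial ℝ, (∫ u in (-π)..π, p.eval (ψ u) * G u) = 0 := by
    intro p
    have hrw : (fun u => p.eval (ψ u) * G u)
        = fun u => ∑ i ∈ Finset.range (p.natDegree + 1), p.coeff i * (G u * ψ u ^ i) := by
      funext u
      rw [Polynomial.eval_eq_sum_range, Finset.sum_mul]
      refine Finset.sum_congr rfl fun i _ => by ring
    rw [hrw, intervalIntegral.integral_finset_sum]
    · refine Finset.sum_eq_zero fun i _ => ?_
      rw [intervalIntegral.integral_const_mul, hGt i, mul_zero]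
    · intro i _
      exact hint _ (continuous_const.mul (hGcont.mul (hcont.pow i)))
  -- Step D : by Weierstrass, ∫ F(ψ) G = 0
  set I : ℝ := ∫ u in (-π)..π, F (ψ u) * G u with hI
  obtain ⟨M, hM⟩ : ∃ M : ℝ, ∀ u ∈ Set.Icc (-π) π, ‖G u‖ ≤ M :=
    (isCompact_Icc).exists_bound_of_continuousOn hGcont.continuousOn
  have hM0 : 0 ≤ M := le_trans (norm_nonneg _) (hM 0 (by constructor <;> linarith [Real.pi_pos]))
  have hIzero : I = 0 := by
    have hbound : ∀ ε' : ℝ, 0 < ε' → |I| ≤ ε' * M * (2 * π) := by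
      intro ε' hε'
      obtain ⟨p, hp⟩ := exists_polynomial_near_of_continuousOn (-1) 1 F
        hFcont.continuousOn ε' hε'
      have hIA : IntervalIntegrable (fun u => F (ψ u) * G u) MeasureTheory.volume (-π) π :=
        hint _ ((hFcont.comp hcont).mul hGcont)
      have hIB : IntervalIntegrable (fun u => Polynomial.eval (ψ u) p * G u)
          MeasureTheory.volume (-π) π :=
        hint _ ((p.continuous.comp hcont).mul hGcont)
      have hIp : I - (∫ u in (-π)..π, p.eval (ψ u) * G u)
          = ∫ u in (-π)..π, (F (ψ u) - p.eval (ψ u)) * G u := by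
        rw [hI, ← intervalIntegral.integral_sub hIA hIB]
        congr 1
        funext u
        ring
      rw [hpoly p, sub_zero] at hIp
      rw [hIp]
      have hB := intervalIntegral.norm_integral_le_of_norm_le_const
        (C := ε' * M) (f := fun u => (F (ψ u) - p.eval (ψ u)) * G u)
        (a := -π) (b := π) ?_
      · calc |∫ u in (-π)..π, (F (ψ u) - p.eval (ψ u)) * G u| ≤ ε' * M * |π - (-π)| := hB
          _ = ε' * M * (2 * π) := by
            rw [abs_of_pos (by linarith [Real.pi_pos])]; ring
      · intro u hu
        have huIcc : u ∈ Set.Icc (-π) π := by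
          rw [Set.uIoc_of_le (by linarith [Real.pi_pos])] at hu
          exact ⟨hu.1.le, hu.2⟩
        have hψmem : ψ u ∈ Set.Icc (-1:ℝ) 1 := abs_le.mp (hbdd u)
        have h1 : ‖F (ψ u) - p.eval (ψ u)‖ ≤ ε' := by
          rw [norm_sub_rev]
          exact (hp _ hψmem).le
        calc ‖(F (ψ u) - p.eval (ψ u)) * G u‖
            = ‖F (ψ u) - p.eval (ψ u)‖ * ‖G u‖ := norm_mul _ _
          _ ≤ ε' * M := mul_le_mul h1 (hM u huIcc) (norm_nonneg _) hε'.le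
    have : |I| ≤ 0 := by
      by_contra hcon
      push_neg at hcon
      have h2π : (0:ℝ) < 2 * π := by linarith [Real.pi_pos]
      set ε' : ℝ := |I| / (2 * (M * (2 * π) + 1)) with hε'
      have hden : (0:ℝ) < M * (2 * π) + 1 := by positivity
      have hε'pos : 0 < ε' := by rw [hε']; positivity
      have := hbound ε' hε'pos
      have hstep : ε' * M * (2 * π) < |I| := by
        have h1 : ε' * M * (2 * π) ≤ ε' * (M * (2 * π) + 1) := by nlinarith
        have h2 : ε' * (M * (2 * π) + 1) = |I| / 2 := by
          rw [hε']; field_simp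
        linarith
      linarith
    exact abs_eq_zero.mp (le_antisymm this (abs_nonneg _))
  -- Step E : but ∫ F(ψ) G > 0, contradiction
  have hintF : ∀ x y : ℝ, IntervalIntegrable (fun u => F (ψ u) * G u) MeasureTheory.volume x y :=
    fun x y => ((hFcont.comp hcont).mul hGcont).intervalIntegrable _ _
  have hβπ : β ≤ π := by linarith [hβδ.le.trans hδπ]
  have hsplit : I = (∫ u in (-π)..α, F (ψ u) * G u) + (∫ u in α..β, F (ψ u) * G u)
      + (∫ u in β..π, F (ψ u) * G u) := by
    rw [hI, ← intervalIntegral.integral_add_adjacent_intervals (hintF (-π) β) (hintF β π),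
      ← intervalIntegral.integral_add_adjacent_intervals (hintF (-π) α) (hintF α β)]
  have h1 : 0 ≤ ∫ u in (-π)..α, F (ψ u) * G u := by
    refine intervalIntegral.integral_nonneg (by linarith [Real.pi_pos]) fun u hu => ?_
    exact hnonneg u ⟨hu.1, le_trans hu.2 (by linarith)⟩
  have h2 : 0 < ∫ u in α..β, F (ψ u) * G u :=
    intervalIntegral.intervalIntegral_pos_of_pos_on (hintF α β) hmidpos hαβ
  have h3 : 0 ≤ ∫ u in β..π, F (ψ u) * G u := by
    refine intervalIntegral.integral_nonneg hβπ fun u hu => ?_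
    exact hnonneg u ⟨le_trans (by linarith) hu.1, hu.2⟩
  rw [hIzero] at hsplit
  linarith
end

section
/- Suppose a_0, …, a_m are real numbers and t_0, …, t_m are m+1 distinct positive integers, each ≥ m, such that Σ_{k=0}^m a_k · (2t)! / ((t-k)!·(t+k)!) = 0 for t = t_0, …, t_m. Then a_k = 0 for all k = 0, …, m. -/
open Polynomial Finset

private lemma aux_up (t k : ℕ) : ∀ m, k ≤ m →
    (t + k).factorial * ∏ j ∈ Finset.Icc (k+1) m, (t + j) = (t + m).factorial := by
  intro m
  induction m with
  | zero => intro hk; interval_cases k; simp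
  | succ m ih =>
    intro hk
    rcases Nat.eq_or_lt_of_le hk with rfl | hlt
    · simp [Finset.Icc_eq_empty_of_lt]
    · have hk' : k ≤ m := Nat.lt_succ_iff.mp hlt
      rw [Finset.prod_Icc_succ_top (by omega), ← mul_assoc, ih hk',
        show t + (m + 1) = (t + m) + 1 by ring, Nat.factorial_succ]
      ring

private noncomputable def fpoly (m k : ℕ) : Polynomial ℝ :=
  (∏ j ∈ Finset.range k, (X - C (j:ℝ))) * ∏ j ∈ Finset.Icc (k+1) m, (X + C (j:ℝ))

private lemma fpoly_monic (m k : ℕ) : (fpoly m k).Monic := by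
  apply Polynomial.Monic.mul <;> apply monic_prod_of_monic <;> intro j _
  · exact monic_X_sub_C _
  · simpa using monic_X_sub_C (-(j:ℝ))

private lemma fpoly_natDegree (m k : ℕ) (hk : k ≤ m) : (fpoly m k).natDegree = m := by
  unfold fpoly
  have m1 : (∏ j ∈ Finset.range k, (X - C (j:ℝ))).Monic :=
    monic_prod_of_monic _ _ fun j _ => monic_X_sub_C _
  have m2 : (∏ j ∈ Finset.Icc (k+1) m, (X + C (j:ℝ))).Monic :=
    monic_prod_of_monic _ _ fun j _ => by simpa using monic_X_sub_C (-(j:ℝ))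
  rw [Polynomial.natDegree_mul m1.ne_zero m2.ne_zero,
    Polynomial.natDegree_prod_of_monic _ _ (fun j _ => monic_X_sub_C _),
    Polynomial.natDegree_prod_of_monic _ _ (fun j _ => by simpa using monic_X_sub_C (-(j:ℝ)))]
  have h1 : ∀ j ∈ Finset.range k, (X - C (j:ℝ)).natDegree = 1 := fun j _ => natDegree_X_sub_C _
  have h2 : ∀ j ∈ Finset.Icc (k+1) m, (X + C (j:ℝ)).natDegree = 1 := by
    intro j _; simpa using natDegree_X_sub_C (-(j:ℝ))
  rw [Finset.sum_congr rfl h1, Finset.sum_congr rfl h2]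
  simp [Nat.card_Icc]
  omega

private lemma fpoly_eval_nat (m k n : ℕ) (hk : k ≤ n) :
    (fpoly m k).eval (n:ℝ)
      = (n.descFactorial k : ℝ) * ((∏ j ∈ Finset.Icc (k+1) m, (n + j) : ℕ) : ℝ) := by
  unfold fpoly
  rw [Polynomial.eval_mul, Polynomial.eval_prod, Polynomial.eval_prod]
  congr 1
  · rw [Nat.descFactorial_eq_prod_range, Nat.cast_prod]
    refine Finset.prod_congr rfl fun j hj => ?_
    have : j ≤ n := le_trans (Nat.le_of_lt_succ (Nat.lt_succ_of_lt (Finset.mem_range.mp hj))) hk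
    simp [Nat.cast_sub this]
  · rw [Nat.cast_prod]
    refine Finset.prod_congr rfl fun j _ => ?_
    push_cast; simp

/-- If `Σ_{k=0}^m a_k (2t)!/((t-k)!(t+k)!) = 0` for `m+1` distinct positive
integers `t = t_0, …, t_m`, each at least `m`, then all `a_k` vanish. -/
theorem binomial_relation_forces_zero
    (m : ℕ) (a : ℕ → ℝ) (t : Fin (m + 1) → ℕ)
    (ht_inj : Function.Injective t)
    (ht_pos : ∀ i, 0 < t i) (ht_ge : ∀ i, m ≤ t i)
    (h : ∀ i : Fin (m + 1),
      ∑ k ∈ Finset.range (m + 1),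
        a k * ((Nat.factorial (2 * t i) : ℝ) /
          ((Nat.factorial (t i - k) : ℝ) * (Nat.factorial (t i + k) : ℝ))) = 0) :
    ∀ k ≤ m, a k = 0 := by
  set p : Polynomial ℝ := ∑ k ∈ Finset.range (m+1), C (a k) * fpoly m k with hp
  -- p evaluates to 0 at each t i
  have heval : ∀ i : Fin (m+1), p.eval ((t i : ℕ) : ℝ) = 0 := by
    intro i
    set T := t i with hT
    have hc : (T.factorial : ℝ) * (T + m).factorial / (2 * T).factorial ≠ 0 := by
      positivity
    have key : p.eval ((T : ℕ) : ℝ)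
        = (∑ k ∈ Finset.range (m + 1),
            a k * ((Nat.factorial (2 * T) : ℝ) /
              ((Nat.factorial (T - k) : ℝ) * (Nat.factorial (T + k) : ℝ))))
          * ((T.factorial : ℝ) * (T + m).factorial / (2 * T).factorial) := by
      rw [hp, Polynomial.eval_finset_sum, Finset.sum_mul]
      refine Finset.sum_congr rfl fun k hk => ?_
      have hkm : k ≤ m := Nat.lt_succ_iff.mp (Finset.mem_range.mp hk)
      have hkT : k ≤ T := le_trans hkm (ht_ge i)
      rw [Polynomial.eval_mul, Polynomial.eval_C, fpoly_eval_nat m k T hkT]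
      have e1 : ((T - k).factorial : ℝ) * (T.descFactorial k : ℝ) = T.factorial := by
        rw [← Nat.cast_mul, Nat.factorial_mul_descFactorial hkT]
      have e2 : ((T + k).factorial : ℝ) * ((∏ j ∈ Finset.Icc (k+1) m, (T + j) : ℕ) : ℝ)
          = (T + m).factorial := by
        rw [← Nat.cast_mul, aux_up T k m hkm]
      have h1 : ((T - k).factorial : ℝ) ≠ 0 := by positivity
      have h2 : ((T + k).factorial : ℝ) ≠ 0 := by positivity
      have h3 : ((2 * T).factorial : ℝ) ≠ 0 := by positivity
      rw [← e1, ← e2]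
      field_simp
    rw [key, h i, zero_mul]
  -- p has degree ≤ m but m+1 roots, so p = 0
  have hpz : p = 0 := by
    refine Polynomial.eq_zero_of_natDegree_lt_card_of_eval_eq_zero p
      (f := fun i => ((t i : ℕ) : ℝ)) (fun i j hij => ht_inj (Nat.cast_injective hij))
      heval ?_
    rw [Fintype.card_fin]
    have : p.natDegree ≤ m := by
      refine Polynomial.natDegree_sum_le_of_forall_le _ _ fun k hk => ?_
      refine le_trans (Polynomial.natDegree_mul_le) ?_
      simp [fpoly_natDegree m k (Nat.lt_succ_iff.mp (Finset.mem_range.mp hk))]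
    omega
  -- triangular system: evaluate at k = 0, 1, ..., m
  intro k
  induction k using Nat.strong_induction_on with
  | _ k ih =>
    intro hkm
    have h0 : p.eval (k : ℝ) = 0 := by rw [hpz]; simp
    rw [hp, Polynomial.eval_finset_sum] at h0
    have hsingle : ∀ i ∈ Finset.range (m+1), i ≠ k →
        (C (a i) * fpoly m i).eval (k : ℝ) = 0 := by
      intro i _ hik
      rcases lt_or_gt_of_ne hik with hlt | hgt
      · rw [Polynomial.eval_mul, Polynomial.eval_C, ih i hlt (le_trans (le_of_lt hlt) hkm)]
        simp
      · -- k < i : the factor (X - C k) appears in the first product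
        rw [Polynomial.eval_mul, Polynomial.eval_C]
        unfold fpoly
        rw [Polynomial.eval_mul, Polynomial.eval_prod]
        rw [Finset.prod_eq_zero (Finset.mem_range.mpr hgt) (by simp)]
        simp
    rw [Finset.sum_eq_single_of_mem k (Finset.mem_range.mpr (Nat.lt_succ_of_le hkm))
      hsingle] at h0
    rw [Polynomial.eval_mul, Polynomial.eval_C] at h0
    have hne : (fpoly m k).eval (k : ℝ) ≠ 0 := by
      unfold fpoly
      rw [Polynomial.eval_mul, Polynomial.eval_prod, Polynomial.eval_prod]
      apply ne_of_gt
      apply mul_pos <;> apply Finset.prod_pos <;> intro j hj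
      · have := Finset.mem_range.mp hj
        simp only [eval_sub, eval_X, eval_C]
        have : (j : ℝ) < k := by exact_mod_cast this
        linarith
      · have hj1 : k + 1 ≤ j := (Finset.mem_Icc.mp hj).1
        simp only [eval_add, eval_X, eval_C]
        have h1 : (1:ℝ) ≤ (j:ℝ) := by exact_mod_cast Nat.one_le_iff_ne_zero.mpr (by omega)
        have h2 : (0:ℝ) ≤ (k:ℝ) := Nat.cast_nonneg k
        linarith
    exact (mul_eq_zero.mp h0).resolve_right hne
end

section
/- Let α, μ, ν be probability measures on ℝ with μ ≠ α, ν ≠ α, and μ ≠ ν. Let Φ be a measure-determining class of bounded measurable functions on ℝ. Then there exist f, g ∈ Φ and a rational c such that the function ψ = f + c·g satisfies: ∫(ψ - ∫ψ dα) dμ ≠ 0, ∫(ψ - ∫ψ dα) dν ≠ 0, and ∫(ψ - ∫ψ dα) dμ ≠ ∫(ψ - ∫ψ dα) dν. -/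
open MeasureTheory

lemma integrable_of_bdd {φ : ℝ → ℝ} (hm : Measurable φ) {C : ℝ} (hC : ∀ x, |φ x| ≤ C)
    (μ : Measure ℝ) [IsFiniteMeasure μ] : Integrable φ μ :=
  (memLp_top_of_bound hm.aestronglyMeasurable C (Filter.Eventually.of_forall fun x => by
    simpa using hC x)).integrable le_top

lemma integral_shift {f g : ℝ → ℝ} {c K : ℝ} (μ : Measure ℝ) [IsProbabilityMeasure μ]
    (hf : Integrable f μ) (hg : Integrable g μ) :
    ∫ x, ((f x + c * g x) - K) ∂μ = (∫ x, f x ∂μ + c * ∫ x, g x ∂μ) - K := by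
  have h1 : Integrable (fun x => f x + c * g x) μ := hf.add (hg.const_mul c)
  rw [integral_sub h1 (integrable_const K), integral_add hf (hg.const_mul c),
    integral_const_mul, integral_const]
  simp

/-- Given probability measures `α, μ, ν` on ℝ with `μ ≠ α`, `ν ≠ α`, `μ ≠ ν`,
and a measure-determining class `Φ` of bounded measurable functions, there are
`f, g ∈ Φ` and a rational `c` such that `ψ = f + c·g` satisfies
`∫ ψ₀ dμ ≠ 0`, `∫ ψ₀ dν ≠ 0` and `∫ ψ₀ dμ ≠ ∫ ψ₀ dν`, where `ψ₀ = ψ - ∫ψ dα`. -/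
theorem exists_distinguishing_function
    (α μ ν : Measure ℝ)
    [IsProbabilityMeasure α] [IsProbabilityMeasure μ] [IsProbabilityMeasure ν]
    (hμα : μ ≠ α) (hνα : ν ≠ α) (hμν : μ ≠ ν)
    (Φ : Set (ℝ → ℝ))
    (hmeas : ∀ φ ∈ Φ, Measurable φ)
    (hbdd : ∀ φ ∈ Φ, ∃ C : ℝ, ∀ x, |φ x| ≤ C)
    (hdet : ∀ μ' ν' : Measure ℝ, IsProbabilityMeasure μ' → IsProbabilityMeasure ν' →
      (∀ φ ∈ Φ, ∫ x, φ x ∂μ' = ∫ x, φ x ∂ν') → μ' = ν') :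
    ∃ f ∈ Φ, ∃ g ∈ Φ, ∃ c : ℚ,
      (∫ x, ((f x + (c : ℝ) * g x) - ∫ y, (f y + (c : ℝ) * g y) ∂α) ∂μ ≠ 0) ∧
      (∫ x, ((f x + (c : ℝ) * g x) - ∫ y, (f y + (c : ℝ) * g y) ∂α) ∂ν ≠ 0) ∧
      (∫ x, ((f x + (c : ℝ) * g x) - ∫ y, (f y + (c : ℝ) * g y) ∂α) ∂μ ≠
        ∫ x, ((f x + (c : ℝ) * g x) - ∫ y, (f y + (c : ℝ) * g y) ∂α) ∂ν) := by
  classical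
  -- functionals
  set A : (ℝ → ℝ) → ℝ := fun φ => ∫ x, φ x ∂μ - ∫ x, φ x ∂α with hA
  set B : (ℝ → ℝ) → ℝ := fun φ => ∫ x, φ x ∂ν - ∫ x, φ x ∂α with hB
  have exA : ∃ φ ∈ Φ, A φ ≠ 0 := by
    by_contra h
    push_neg at h
    exact hμα (hdet μ α ‹_› ‹_› fun φ hφ => by
      have := h φ hφ; simp only [hA] at this; linarith [this])
  have exB : ∃ φ ∈ Φ, B φ ≠ 0 := by
    by_contra h
    push_neg at h
    exact hνα (hdet ν α ‹_› ‹_› fun φ hφ => by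
      have := h φ hφ; simp only [hB] at this; linarith [this])
  have exAB : ∃ φ ∈ Φ, A φ ≠ B φ := by
    by_contra h
    push_neg at h
    exact hμν (hdet μ ν ‹_› ‹_› fun φ hφ => by
      have := h φ hφ; simp only [hA, hB] at this; linarith [this])
  obtain ⟨f1, hf1, hA1⟩ := exA
  obtain ⟨f2, hf2, hB2⟩ := exB
  obtain ⟨f3, hf3, hAB3⟩ := exAB
  -- choose a pair (f,g) such that each of the three functionals is nonzero on f or g
  have key : ∃ f ∈ Φ, ∃ g ∈ Φ,
      (A f ≠ 0 ∨ A g ≠ 0) ∧ (B f ≠ 0 ∨ B g ≠ 0) ∧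
      (A f - B f ≠ 0 ∨ A g - B g ≠ 0) := by
    by_cases h12 : A f1 - B f1 ≠ 0 ∨ A f2 - B f2 ≠ 0
    · exact ⟨f1, hf1, f2, hf2, Or.inl hA1, Or.inr hB2, h12⟩
    · push_neg at h12
      have hBf1 : B f1 ≠ 0 := by
        have := h12.1; intro h; apply hA1; linarith
      exact ⟨f1, hf1, f3, hf3, Or.inl hA1, Or.inl hBf1,
        Or.inr (sub_ne_zero.mpr hAB3)⟩
  obtain ⟨f, hf, g, hg, h1, h2, h3⟩ := key
  refine ⟨f, hf, g, hg, ?_⟩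
  -- pick a rational avoiding finitely many bad values
  have hroot : ∀ (L M : ℝ), (L ≠ 0 ∨ M ≠ 0) →
      {c : ℝ | L + c * M = 0}.Finite := by
    intro L M hLM
    rcases eq_or_ne M 0 with hM | hM
    · have hL : L ≠ 0 := by rcases hLM with h | h; exact h; exact absurd hM h
      convert Set.finite_empty
      ext c; simp [hM, hL]
    · apply Set.Finite.subset (Set.finite_singleton (-L / M))
      intro c hc
      simp only [Set.mem_setOf_eq] at hc
      simp only [Set.mem_singleton_iff]
      field_simp
      linarith
  have hfin : ({c : ℝ | A f + c * A g = 0} ∪ {c : ℝ | B f + c * B g = 0} ∪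
      {c : ℝ | (A f - B f) + c * (A g - B g) = 0}).Finite :=
    ((hroot _ _ h1).union (hroot _ _ h2)).union (hroot _ _ h3)
  have hpre : ((((↑) : ℚ → ℝ) ⁻¹' _)).Finite := hfin.preimage (Rat.cast_injective.injOn)
  obtain ⟨c, hc⟩ := hpre.infinite_compl.nonempty
  simp only [Set.mem_compl_iff, Set.mem_preimage, Set.mem_union, Set.mem_setOf_eq,
    not_or] at hc
  obtain ⟨⟨hc1, hc2⟩, hc3⟩ := hc
  refine ⟨c, ?_, ?_, ?_⟩
  -- integrability
  all_goals {
    obtain ⟨Cf, hCf⟩ := hbdd f hf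
    obtain ⟨Cg, hCg⟩ := hbdd g hg
    have hfμ := integrable_of_bdd (hmeas f hf) hCf μ
    have hgμ := integrable_of_bdd (hmeas g hg) hCg μ
    have hfν := integrable_of_bdd (hmeas f hf) hCf ν
    have hgν := integrable_of_bdd (hmeas g hg) hCg ν
    have hfα := integrable_of_bdd (hmeas f hf) hCf α
    have hgα := integrable_of_bdd (hmeas g hg) hCg α
    have hKα : ∫ y, (f y + (c : ℝ) * g y) ∂α =
        ∫ y, f y ∂α + (c : ℝ) * ∫ y, g y ∂α := by
      rw [integral_add hfα (hgα.const_mul _), integral_const_mul]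
    simp only [hKα, integral_shift μ hfμ hgμ, integral_shift ν hfν hgν]
    simp only [hA, hB] at hc1 hc2 hc3 ⊢
    intro h
    first
    | exact hc1 (by ring_nf; ring_nf at h; linarith)
    | exact hc2 (by ring_nf; ring_nf at h; linarith)
    | exact hc3 (by ring_nf; ring_nf at h; linarith)
  }
end
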